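/- Fix m ≥ 1 and k ≥ 1 peers with measurable, everywhere strictly positive probability densities q_1, …, q_k : ℝ^m → ℝ, whose reports X_1, …, X_k are drawn independently from these densities. Fix θ ∈ ℝ^m and u, v ∈ ℝ^m with ‖u − θ‖ < ‖v − θ‖. Then the difference of strict-win probabilities g(u,v,θ) := ∫_{(ℝ^m)^k} ( 𝟙[‖u − θ‖ < ‖x_i − θ‖ for all i] − 𝟙[‖v − θ‖ < ‖x_i − θ‖ for all i] ) ∏_{i=1}^k q_i(x_i) dx equals the probability that min_{1≤i≤k} ‖X_i − θ‖ lies in the interval (‖u − θ‖, ‖v − θ‖], and this difference is strictly positive (Step 1 of the proof of Theorem 1: full support makes moving the report closer to the reference strictly beneficial). -/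

import Mathlib

open MeasureTheory

/-- The gain in strict-win probability from reporting `u` instead of `v`, against
`k` peers reporting independently from densities `q i`, with reference solution `θ`. -/
noncomputable def winGain (m k : ℕ) (q : Fin k → EuclideanSpace ℝ (Fin m) → ℝ)
    (θ u v : EuclideanSpace ℝ (Fin m)) : ℝ :=
  ∫ x : Fin k → EuclideanSpace ℝ (Fin m),
    ((if ∀ i : Fin k, ‖u - θ‖ < ‖x i - θ‖ then (1 : ℝ) else 0) -
      (if ∀ i : Fin k, ‖v - θ‖ < ‖x i - θ‖ then (1 : ℝ) else 0)) *
      ∏ i : Fin k, q i (x i)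

set_option maxHeartbeats 1000000 in
/-- **Step 1 of the proof of Theorem 1.** With everywhere-positive peer densities,
the gain in strict-win probability from moving the report from `v` to the strictly
closer `u` equals the probability that the minimal peer distance to the reference
`θ` lies in the interval `(‖u − θ‖, ‖v − θ‖]`, and this gain is strictly positive. -/
theorem winGain_eq_shell_prob_and_pos
    (m k : ℕ) (hm : 1 ≤ m) (hk : 1 ≤ k)
    (q : Fin k → EuclideanSpace ℝ (Fin m) → ℝ)
    (hq_meas : ∀ i, Measurable (q i))
    (hq_pos : ∀ i x, 0 < q i x)
    (hq_int : ∀ i, (∫ x : EuclideanSpace ℝ (Fin m), q i x) = 1)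
    (θ u v : EuclideanSpace ℝ (Fin m))
    (huv : ‖u - θ‖ < ‖v - θ‖) :
    winGain m k q θ u v =
      (∫ x : Fin k → EuclideanSpace ℝ (Fin m),
        (if ‖u - θ‖ < (⨅ i : Fin k, ‖x i - θ‖) ∧ (⨅ i : Fin k, ‖x i - θ‖) ≤ ‖v - θ‖
          then (1 : ℝ) else 0) * ∏ i : Fin k, q i (x i)) ∧
    0 < winGain m k q θ u v := by
  have hkne : Nonempty (Fin k) := ⟨⟨0, hk⟩⟩
  -- infimum facts
  have hinf_lt : ∀ (x : Fin k → (EuclideanSpace ℝ (Fin m))) (c : ℝ),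
      (c < ⨅ i, ‖x i - θ‖) ↔ ∀ i, c < ‖x i - θ‖ := by
    intro x c
    constructor
    · intro h i
      exact lt_of_lt_of_le h (ciInf_le (Finite.bddBelow_range _) i)
    · intro h
      obtain ⟨i, hi⟩ := exists_eq_ciInf_of_finite (f := fun i => ‖x i - θ‖)
      rw [← hi]; exact h i
  have hinf_le : ∀ (x : Fin k → (EuclideanSpace ℝ (Fin m))) (c : ℝ),
      ((⨅ i, ‖x i - θ‖) ≤ c) ↔ ∃ i, ‖x i - θ‖ ≤ c := by
    intro x c
    rw [← not_lt, hinf_lt]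
    push_neg
    rfl
  -- pointwise identity of the integrands
  have hfun : ∀ x : Fin k → (EuclideanSpace ℝ (Fin m)),
      ((if ∀ i : Fin k, ‖u - θ‖ < ‖x i - θ‖ then (1 : ℝ) else 0) -
        (if ∀ i : Fin k, ‖v - θ‖ < ‖x i - θ‖ then (1 : ℝ) else 0)) =
      (if ‖u - θ‖ < (⨅ i : Fin k, ‖x i - θ‖) ∧ (⨅ i : Fin k, ‖x i - θ‖) ≤ ‖v - θ‖
        then (1 : ℝ) else 0) := by
    intro x
    by_cases hA : ∀ i : Fin k, ‖u - θ‖ < ‖x i - θ‖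
    · by_cases hB : ∀ i : Fin k, ‖v - θ‖ < ‖x i - θ‖
      · have : ¬ ((⨅ i, ‖x i - θ‖) ≤ ‖v - θ‖) := not_le.mpr ((hinf_lt x ‖v - θ‖).mpr hB)
        simp [hA, hB, this]
      · have h1 : ‖u - θ‖ < ⨅ i, ‖x i - θ‖ := (hinf_lt x ‖u - θ‖).mpr hA
        have h2 : (⨅ i, ‖x i - θ‖) ≤ ‖v - θ‖ := by
          rw [hinf_le]
          push_neg at hB
          exact hB
        simp [hA, hB, h1, h2]
    · have hB : ¬ ∀ i : Fin k, ‖v - θ‖ < ‖x i - θ‖ := by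
        intro hB
        exact hA fun i => lt_trans huv (hB i)
      have h1 : ¬ ‖u - θ‖ < ⨅ i, ‖x i - θ‖ := fun h => hA ((hinf_lt x ‖u - θ‖).mp h)
      simp [hA, hB, h1]
  have heq : winGain m k q θ u v =
      ∫ x : Fin k → (EuclideanSpace ℝ (Fin m)),
        (if ‖u - θ‖ < (⨅ i : Fin k, ‖x i - θ‖) ∧ (⨅ i : Fin k, ‖x i - θ‖) ≤ ‖v - θ‖
          then (1 : ℝ) else 0) * ∏ i : Fin k, q i (x i) := by
    unfold winGain
    exact integral_congr_ae (Filter.Eventually.of_forall fun x => by simp only [hfun x])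
  refine ⟨heq, ?_⟩
  rw [heq]
  -- now prove positivity of the shell integral
  set S : Set (Fin k → (EuclideanSpace ℝ (Fin m))) :=
    {x | ‖u - θ‖ < (⨅ i : Fin k, ‖x i - θ‖) ∧ (⨅ i : Fin k, ‖x i - θ‖) ≤ ‖v - θ‖} with hS
  set g : (Fin k → (EuclideanSpace ℝ (Fin m))) → ℝ := fun x => ∏ i, q i (x i) with hg
  have hfeq : (fun x : Fin k → (EuclideanSpace ℝ (Fin m)) =>
      (if ‖u - θ‖ < (⨅ i : Fin k, ‖x i - θ‖) ∧ (⨅ i : Fin k, ‖x i - θ‖) ≤ ‖v - θ‖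
        then (1 : ℝ) else 0) * ∏ i : Fin k, q i (x i)) = S.indicator g := by
    funext x
    by_cases hP : ‖u - θ‖ < (⨅ i : Fin k, ‖x i - θ‖) ∧ (⨅ i : Fin k, ‖x i - θ‖) ≤ ‖v - θ‖
    · rw [if_pos hP, one_mul]
      exact (Set.indicator_of_mem (show x ∈ S from hP) g).symm
    · rw [if_neg hP, zero_mul]
      exact (Set.indicator_of_notMem (show x ∉ S from hP) g).symm
  rw [hfeq]
  -- measurability of S
  have hSmeas : MeasurableSet S := by
    have hSdesc : S = (⋂ i : Fin k, {x : Fin k → (EuclideanSpace ℝ (Fin m)) | ‖u - θ‖ < ‖x i - θ‖}) ∩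
        (⋃ i : Fin k, {x : Fin k → (EuclideanSpace ℝ (Fin m)) | ‖x i - θ‖ ≤ ‖v - θ‖}) := by
      ext x
      simp only [Set.mem_inter_iff, Set.mem_iInter, Set.mem_iUnion, Set.mem_setOf_eq, S,
        hinf_lt x ‖u - θ‖, hinf_le x ‖v - θ‖]
    rw [hSdesc]
    have hcont : ∀ i : Fin k, Measurable fun x : Fin k → (EuclideanSpace ℝ (Fin m)) => ‖x i - θ‖ :=
      fun i => ((continuous_apply i).sub continuous_const).norm.measurable
    exact MeasurableSet.inter
      (MeasurableSet.iInter fun i => measurableSet_lt measurable_const (hcont i))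
      (MeasurableSet.iUnion fun i => measurableSet_le (hcont i) measurable_const)
  -- integrability
  have hqi : ∀ i, Integrable (q i) := by
    intro i
    by_contra h
    have h1 := hq_int i
    rw [integral_undef h] at h1
    exact one_ne_zero h1.symm
  have hg_int : Integrable g := Integrable.fintype_prod (𝕜 := ℝ) hqi
  have hf_int : Integrable (S.indicator g) := hg_int.indicator hSmeas
  have hg_pos : ∀ x, 0 < g x := fun x => Finset.prod_pos fun i _ => hq_pos i (x i)
  have hnn : 0 ≤ S.indicator g := fun x => Set.indicator_nonneg (fun y _ => (hg_pos y).le) x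
  rw [integral_pos_iff_support_of_nonneg hnn hf_int]
  have hsupp : Function.support (S.indicator g) = S := by
    rw [Set.support_indicator]
    ext x
    simp [Function.support, (hg_pos x).ne']
  rw [hsupp]
  -- S contains ‖u - θ‖ product of annuli with positive volume
  have ha0 : 0 ≤ ‖u - θ‖ := norm_nonneg _
  set A : Set (EuclideanSpace ℝ (Fin m)) := {y : (EuclideanSpace ℝ (Fin m)) | ‖u - θ‖ < ‖y - θ‖ ∧ ‖y - θ‖ ≤ ‖v - θ‖} with hA
  have hpiA : (Set.pi Set.univ fun _ : Fin k => A) ⊆ S := by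
    intro x hx
    have hx' : ∀ i, ‖u - θ‖ < ‖x i - θ‖ ∧ ‖x i - θ‖ ≤ ‖v - θ‖ := fun i => hx i (Set.mem_univ i)
    constructor
    · exact (hinf_lt x ‖u - θ‖).mpr fun i => (hx' i).1
    · exact (hinf_le x ‖v - θ‖).mpr ⟨⟨0, hk⟩, (hx' ⟨0, hk⟩).2⟩
  -- A contains ‖u - θ‖ nonempty open set
  set O : Set (EuclideanSpace ℝ (Fin m)) := (fun y : (EuclideanSpace ℝ (Fin m)) => ‖y - θ‖) ⁻¹' Set.Ioo ‖u - θ‖ ‖v - θ‖ with hO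
  have hOopen : IsOpen O := IsOpen.preimage (by continuity) isOpen_Ioo
  have hOA : O ⊆ A := fun y hy => ⟨hy.1, hy.2.le⟩
  have hOne : O.Nonempty := by
    refine ⟨θ + ((‖u - θ‖ + ‖v - θ‖) / 2) • EuclideanSpace.single (⟨0, hm⟩ : Fin m) (1 : ℝ), ?_⟩
    have hnorm : ‖θ + ((‖u - θ‖ + ‖v - θ‖) / 2) • EuclideanSpace.single (⟨0, hm⟩ : Fin m) (1 : ℝ) - θ‖
        = (‖u - θ‖ + ‖v - θ‖) / 2 := by
      rw [add_sub_cancel_left, norm_smul, EuclideanSpace.norm_single, norm_one, mul_one,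
        Real.norm_eq_abs, abs_of_nonneg (by positivity)]
    simp only [O, Set.mem_preimage, Set.mem_Ioo, hnorm]
    constructor <;> linarith
  have hOpos : 0 < volume O := hOopen.measure_pos volume hOne
  have hApos : 0 < volume A := lt_of_lt_of_le hOpos (measure_mono hOA)
  have hpivol : 0 < volume (Set.pi Set.univ fun _ : Fin k => A) := by
    rw [volume_pi_pi]
    exact CanonicallyOrderedAdd.prod_pos.mpr fun i _ => hApos
  exact lt_of_lt_of_le hpivol (measure_mono hpiA)
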